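/- Let d ≥ 1, h > 0, and let χ : ℝ^d → {0,1} be measurable and Lebesgue integrable. Define u* : ℝ^d → {0,1} as the indicator function of the set { x ∈ ℝ^d : (G_h ⋆ χ)(x) > 1/2 } (this set has finite Lebesgue measure, so u* is integrable). Then for every measurable integrable u : ℝ^d → [0,1]: ∫_{ℝ^d} (G_{h/2} ⋆ (u* − χ))² dx + ∫_{ℝ^d} u* dx − ∫_{ℝ^d} u*·(G_h ⋆ u*) dx ≤ ∫_{ℝ^d} (G_{h/2} ⋆ (u − χ))² dx + ∫_{ℝ^d} u dx − ∫_{ℝ^d} u·(G_h ⋆ u) dx. In other words, the thresholding step minimizes the functional u ↦ (1/(2h))·d_h²(u,χ) + E_h(u) of the associated minimizing movements scheme. -/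

import Mathlib

open MeasureTheory

/-- The Gaussian heat kernel `G_h(z) = (2πh)^{-d/2} exp(-|z|²/(2h))` on `ℝ^d`. -/
noncomputable def gauss (d : ℕ) (h : ℝ) (z : EuclideanSpace ℝ (Fin d)) : ℝ :=
  (2 * Real.pi * h) ^ (-(d : ℝ) / 2) * Real.exp (-‖z‖ ^ 2 / (2 * h))

/-- Convolution of two functions on `ℝ^d` w.r.t. Lebesgue measure. -/
noncomputable def conv (d : ℕ) (f g : EuclideanSpace ℝ (Fin d) → ℝ)
    (x : EuclideanSpace ℝ (Fin d)) : ℝ :=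
  ∫ y, f (x - y) * g y

/-!
The Gaussian is even and `G_{h/2} ⋆ G_{h/2} = G_h`, so by Fubini
`∫ (G_{h/2} ⋆ f)² = ∫ f · (G_h ⋆ f)`. For `f = u - χ` the quadratic term `∫ u · (G_h ⋆ u)`
cancels against the energy, and the functional becomes
`∫ u · (1 - 2 G_h ⋆ χ) + ∫ χ · (G_h ⋆ χ)`, which is affine in `u`. Its integrand is minimised
pointwise over `u ∈ [0,1]` by taking `u = 1` exactly where `G_h ⋆ χ > 1/2`.
-/

open Real Filter
open scoped Convolution

theorem integrable_ite_lt_one_zero {α : Type*} [MeasurableSpace α] {μ : Measure α} {φ : α → ℝ}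
    {c : ℝ} (hc : 0 < c) (hφm : Measurable φ) (hφ : Integrable φ μ) :
    Integrable (fun x => if c < φ x then (1 : ℝ) else 0) μ := by
  have hindicator : (fun x => if c < φ x then (1 : ℝ) else 0) = {x | c < φ x}.indicator 1 := by
    ext x
    simp [Set.indicator_apply]
  rw [hindicator, integrable_indicator_iff (measurableSet_lt measurable_const hφm)]
  exact integrableOn_const (hφ.measure_gt_lt_top hc).ne

theorem ite_half_lt_mul_le_mul {a u : ℝ} (hu : u ∈ Set.Icc (0 : ℝ) 1) :
    (if 1 / 2 < a then (1 : ℝ) else 0) * (1 - 2 * a) ≤ u * (1 - 2 * a) := by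
  obtain ⟨hu0, hu1⟩ := hu
  split_ifs <;> nlinarith

section Gaussian

variable {d : ℕ} {t h : ℝ}

theorem continuous_gauss : Continuous (gauss d t) := by
  unfold gauss; fun_prop

theorem gauss_neg (z : EuclideanSpace ℝ (Fin d)) : gauss d t (-z) = gauss d t z := by
  simp [gauss]

theorem abs_gauss_le (ht : 0 < t) (z : EuclideanSpace ℝ (Fin d)) :
    |gauss d t z| ≤ (2 * π * t) ^ (-(d : ℝ) / 2) := by
  have hexp : exp (-‖z‖ ^ 2 / (2 * t)) ≤ 1 := exp_le_one_iff.2 <| by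
    apply div_nonpos_of_nonpos_of_nonneg <;> nlinarith [sq_nonneg ‖z‖]
  unfold gauss
  rw [abs_of_nonneg (by positivity)]
  exact mul_le_of_le_one_right (by positivity) hexp

theorem integral_gauss (ht : 0 < t) : ∫ z, gauss d t z = 1 := by
  have hb : 0 < 1 / (2 * t) := by positivity
  have hexp : ∀ z : EuclideanSpace ℝ (Fin d),
      exp (-‖z‖ ^ 2 / (2 * t)) = exp (-(1 / (2 * t)) * ‖z‖ ^ 2) := fun z => by
    congr 1; ring
  unfold gauss
  rw [integral_const_mul, integral_congr_ae (Eventually.of_forall hexp),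
    GaussianFourier.integral_rexp_neg_mul_sq_norm hb, finrank_euclideanSpace_fin,
    show π / (1 / (2 * t)) = 2 * π * t by field_simp, ← rpow_add (by positivity),
    neg_div, neg_add_cancel, rpow_zero]

theorem integrable_gauss (ht : 0 < t) : Integrable (gauss d t) :=
  Integrable.of_integral_ne_zero (by simp [integral_gauss ht])

theorem norm_sub_sq_add_norm_sq (x y : EuclideanSpace ℝ (Fin d)) :
    ‖x - y‖ ^ 2 + ‖y‖ ^ 2 = ‖x‖ ^ 2 / 2 + 2 * ‖y - (2⁻¹ : ℝ) • x‖ ^ 2 := by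
  simp only [norm_sub_sq_real, norm_smul, inner_smul_right, real_inner_comm x y]
  norm_num
  ring

theorem gauss_half_mul_gauss_half (hh : 0 < h) (x y : EuclideanSpace ℝ (Fin d)) :
    gauss d (h / 2) (x - y) * gauss d (h / 2) y
      = gauss d h x * ((π * (h / 2)) ^ (-(d : ℝ) / 2)
          * exp (-(2 / h) * ‖y - (2⁻¹ : ℝ) • x‖ ^ 2)) := by
  have hconst : (2 * π * (h / 2)) ^ (-(d : ℝ) / 2) * (2 * π * (h / 2)) ^ (-(d : ℝ) / 2)
      = (2 * π * h) ^ (-(d : ℝ) / 2) * (π * (h / 2)) ^ (-(d : ℝ) / 2) := by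
    rw [← mul_rpow (by positivity) (by positivity), ← mul_rpow (by positivity) (by positivity)]
    ring_nf
  have hexp : -‖x - y‖ ^ 2 / (2 * (h / 2)) + -‖y‖ ^ 2 / (2 * (h / 2))
      = -‖x‖ ^ 2 / (2 * h) + -(2 / h) * ‖y - (2⁻¹ : ℝ) • x‖ ^ 2 := by
    rw [← add_div, ← neg_add, norm_sub_sq_add_norm_sq]
    field_simp
    ring
  unfold gauss
  rw [mul_mul_mul_comm, ← exp_add, hexp, hconst, exp_add]
  ring

theorem conv_gauss_half_gauss_half (hh : 0 < h) :
    conv d (gauss d (h / 2)) (gauss d (h / 2)) = gauss d h := by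
  ext x
  have hb : (0 : ℝ) < 2 / h := by positivity
  simp only [conv, gauss_half_mul_gauss_half hh x]
  rw [integral_const_mul, integral_const_mul,
    integral_sub_right_eq_self (fun y => exp (-(2 / h) * ‖y‖ ^ 2)),
    GaussianFourier.integral_rexp_neg_mul_sq_norm hb, finrank_euclideanSpace_fin,
    show π / (2 / h) = π * (h / 2) by field_simp, ← rpow_add (by positivity),
    neg_div, neg_add_cancel, rpow_zero, mul_one]

end Gaussian

section Convolution

variable {d : ℕ} {K f g : EuclideanSpace ℝ (Fin d) → ℝ} {C : ℝ}

theorem conv_eq_convolution : conv d K g = K ⋆[ContinuousLinearMap.mul ℝ ℝ] g := by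
  ext x
  rw [convolution_mul_swap]
  rfl

theorem continuous_conv (hK : Continuous K) (hKC : ∀ z, |K z| ≤ C) (hg : Integrable g) :
    Continuous (conv d K g) := by
  rw [conv_eq_convolution]
  exact BddAbove.continuous_convolution_left_of_integrable _ ⟨C, by
    rintro _ ⟨z, rfl⟩; exact hKC z⟩ hK hg

theorem integrable_conv (hK : Integrable K) (hg : Integrable g) : Integrable (conv d K g) := by
  rw [conv_eq_convolution]
  exact hK.integrable_convolution _ hg

theorem abs_conv_le (hKC : ∀ z, |K z| ≤ C) (hg : Integrable g) (x : EuclideanSpace ℝ (Fin d)) :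
    |conv d K g x| ≤ C * ∫ y, |g y| := by
  rw [← Real.norm_eq_abs, ← integral_const_mul]
  refine norm_integral_le_of_norm_le (hg.abs.const_mul C) (Eventually.of_forall fun y => ?_)
  rw [norm_mul, Real.norm_eq_abs, Real.norm_eq_abs]
  exact mul_le_mul_of_nonneg_right (hKC _) (abs_nonneg _)

theorem integrable_mul_conv (hK : Continuous K) (hKC : ∀ z, |K z| ≤ C) (hf : Integrable f)
    (hg : Integrable g) : Integrable (fun x => f x * conv d K g x) := by
  simpa only [mul_comm] using hf.bdd_mul (continuous_conv hK hKC hg).aestronglyMeasurable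
    (Eventually.of_forall fun x => abs_conv_le hKC hg x)

theorem conv_sub (hK : Measurable K) (hKC : ∀ z, |K z| ≤ C) (hf : Integrable f)
    (hg : Integrable g) (x : EuclideanSpace ℝ (Fin d)) :
    conv d K (fun y => f y - g y) x = conv d K f x - conv d K g x := by
  have hint : ∀ {g : EuclideanSpace ℝ (Fin d) → ℝ}, Integrable g →
      Integrable (fun y => K (x - y) * g y) := fun hg =>
    hg.bdd_mul (hK.comp (measurable_const.sub measurable_id)).aestronglyMeasurable
      (Eventually.of_forall fun y => hKC _)
  simp only [conv, mul_sub]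
  exact integral_sub (hint hf) (hint hg)

theorem integral_mul_conv_comm (hK : Measurable K) (hKC : ∀ z, |K z| ≤ C)
    (hK_neg : ∀ z, K (-z) = K z) (hf : Integrable f) (hg : Integrable g) :
    ∫ x, f x * conv d K g x = ∫ y, g y * conv d K f y := by
  have hprod : Integrable (fun p : EuclideanSpace ℝ (Fin d) × EuclideanSpace ℝ (Fin d) =>
      f p.1 * (K (p.1 - p.2) * g p.2)) := by
    refine ((hf.mul_prod hg).bdd_mul (hK.comp measurable_sub).aestronglyMeasurable
      (Eventually.of_forall fun p => hKC _)).congr (Eventually.of_forall fun p => ?_)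
    simp only [Function.comp_apply]
    ring
  simp only [conv, ← integral_const_mul]
  rw [integral_integral_swap hprod]
  congr 1 with y
  congr 1 with x
  rw [← hK_neg, neg_sub]
  ring

end Convolution

section HeatSemigroup

variable {d : ℕ} {h : ℝ} {f : EuclideanSpace ℝ (Fin d) → ℝ}

theorem conv_gauss_half_conv (hh : 0 < h) (hf : Integrable f) :
    conv d (gauss d (h / 2)) (conv d (gauss d (h / 2)) f) = conv d (gauss d h) f := by
  have hh2 : 0 < h / 2 := half_pos hh
  ext y
  have hreflect : ∀ z, conv d (gauss d (h / 2)) (fun x => gauss d (h / 2) (y - x)) z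
      = gauss d h (y - z) := fun z => by
    rw [← gauss_neg, neg_sub, ← conv_gauss_half_gauss_half hh, conv, conv,
      ← integral_add_right_eq_self _ y]
    congr 1 with w
    rw [add_comm w y, sub_add_eq_sub_sub, sub_add_cancel_left, gauss_neg]
  calc conv d (gauss d (h / 2)) (conv d (gauss d (h / 2)) f) y
      = ∫ x, gauss d (h / 2) (y - x) * conv d (gauss d (h / 2)) f x := rfl
    _ = ∫ z, f z * conv d (gauss d (h / 2)) (fun x => gauss d (h / 2) (y - x)) z :=
        integral_mul_conv_comm continuous_gauss.measurable (abs_gauss_le hh2) gauss_neg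
          ((integrable_gauss hh2).comp_sub_left y) hf
    _ = conv d (gauss d h) f y := by
        simp only [hreflect]
        simp only [conv, mul_comm (f _)]

theorem integral_sq_conv_gauss_half (hh : 0 < h) (hf : Integrable f) :
    ∫ x, conv d (gauss d (h / 2)) f x ^ 2 = ∫ x, f x * conv d (gauss d h) f x := by
  have hh2 : 0 < h / 2 := half_pos hh
  calc ∫ x, conv d (gauss d (h / 2)) f x ^ 2
      = ∫ x, conv d (gauss d (h / 2)) f x * conv d (gauss d (h / 2)) f x := by simp only [sq]
    _ = ∫ x, f x * conv d (gauss d (h / 2)) (conv d (gauss d (h / 2)) f) x :=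
        integral_mul_conv_comm continuous_gauss.measurable (abs_gauss_le hh2) gauss_neg
          (integrable_conv (integrable_gauss hh2) hf) hf
    _ = ∫ x, f x * conv d (gauss d h) f x := by rw [conv_gauss_half_conv hh hf]

end HeatSemigroup

section Thresholding

variable {d : ℕ} {h : ℝ} {v χ : EuclideanSpace ℝ (Fin d) → ℝ}

theorem integrable_mul_one_sub_two_mul_conv (hh : 0 < h) (hv : Integrable v)
    (hχ : Integrable χ) : Integrable (fun x => v x * (1 - 2 * conv d (gauss d h) χ x)) := by
  have hvχ := integrable_mul_conv continuous_gauss (abs_gauss_le hh) hv hχ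
  refine (hv.sub (hvχ.const_mul 2)).congr (Eventually.of_forall fun x => ?_)
  simp only [Pi.sub_apply]
  ring

theorem integral_sq_conv_sub_add_energy (hh : 0 < h) (hv : Integrable v) (hχ : Integrable χ) :
    (∫ x, conv d (gauss d (h / 2)) (fun y => v y - χ y) x ^ 2)
        + (∫ x, v x) - (∫ x, v x * conv d (gauss d h) v x)
      = (∫ x, v x * (1 - 2 * conv d (gauss d h) χ x))
        + ∫ x, χ x * conv d (gauss d h) χ x := by
  have hG := abs_gauss_le (d := d) hh
  have hvv := integrable_mul_conv continuous_gauss hG hv hv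
  have hvχ := integrable_mul_conv continuous_gauss hG hv hχ
  have hχv := integrable_mul_conv continuous_gauss hG hχ hv
  have hχχ := integrable_mul_conv continuous_gauss hG hχ hχ
  have hsymm : ∫ x, χ x * conv d (gauss d h) v x = ∫ x, v x * conv d (gauss d h) χ x :=
    integral_mul_conv_comm continuous_gauss.measurable hG gauss_neg hχ hv
  have hvv_vχ : Integrable (fun x => v x * conv d (gauss d h) v x
      - v x * conv d (gauss d h) χ x) := hvv.sub hvχ
  have hχv_χχ : Integrable (fun x => χ x * conv d (gauss d h) v x
      - χ x * conv d (gauss d h) χ x) := hχv.sub hχχ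
  have hv_vχ : Integrable (fun x => 2 * (v x * conv d (gauss d h) χ x)) := hvχ.const_mul 2
  have hexpand : ∀ x, (v x - χ x) * conv d (gauss d h) (fun y => v y - χ y) x
      = (v x * conv d (gauss d h) v x - v x * conv d (gauss d h) χ x)
        - (χ x * conv d (gauss d h) v x - χ x * conv d (gauss d h) χ x) := fun x => by
    rw [conv_sub continuous_gauss.measurable hG hv hχ]
    ring
  have hlinear : ∀ x, v x * (1 - 2 * conv d (gauss d h) χ x)
      = v x - 2 * (v x * conv d (gauss d h) χ x) := fun x => by ring
  rw [integral_sq_conv_gauss_half (f := fun y => v y - χ y) hh (hv.sub hχ)]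
  simp only [hexpand, hlinear]
  rw [integral_sub hvv_vχ hχv_χχ, integral_sub hvv hvχ, integral_sub hχv hχχ,
    integral_sub hv hv_vχ, integral_const_mul, hsymm]
  ring

end Thresholding

theorem stmt_7_general (d : ℕ) (h : ℝ) (hh : 0 < h)
    (χ : EuclideanSpace ℝ (Fin d) → ℝ)
    (hχ_int : Integrable χ)
    (ustar : EuclideanSpace ℝ (Fin d) → ℝ)
    (hustar : ustar = fun x => if 1 / 2 < conv d (gauss d h) χ x then (1 : ℝ) else 0)
    (u : EuclideanSpace ℝ (Fin d) → ℝ)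
    (hu_range : ∀ x, u x ∈ Set.Icc (0 : ℝ) 1)
    (hu_int : Integrable u) :
    (∫ x, (conv d (gauss d (h / 2)) (fun y => ustar y - χ y) x) ^ 2)
      + (∫ x, ustar x) - (∫ x, ustar x * conv d (gauss d h) ustar x)
    ≤ (∫ x, (conv d (gauss d (h / 2)) (fun y => u y - χ y) x) ^ 2)
      + (∫ x, u x) - ∫ x, u x * conv d (gauss d h) u x := by
  have hφ : Continuous (conv d (gauss d h) χ) :=
    continuous_conv continuous_gauss (abs_gauss_le hh) hχ_int
  have hustar_int : Integrable ustar := hustar ▸ integrable_ite_lt_one_zero one_half_pos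
    hφ.measurable (integrable_conv (integrable_gauss hh) hχ_int)
  rw [integral_sq_conv_sub_add_energy hh hustar_int hχ_int,
    integral_sq_conv_sub_add_energy hh hu_int hχ_int, add_le_add_iff_right]
  refine integral_mono (integrable_mul_one_sub_two_mul_conv hh hustar_int hχ_int)
    (integrable_mul_one_sub_two_mul_conv hh hu_int hχ_int) fun x => ?_
  rw [hustar]
  exact ite_half_lt_mul_le_mul (hu_range x)

/-- The thresholding step minimizes `u ↦ (1/(2h)) d_h²(u,χ) + E_h(u)` among all
measurable `[0,1]`-valued integrable `u`. -/
theorem stmt_7 (d : ℕ) (hd : 1 ≤ d) (h : ℝ) (hh : 0 < h)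
    (χ : EuclideanSpace ℝ (Fin d) → ℝ)
    (hχ_meas : Measurable χ) (hχ_val : ∀ x, χ x = 0 ∨ χ x = 1) (hχ_int : Integrable χ)
    (ustar : EuclideanSpace ℝ (Fin d) → ℝ)
    (hustar : ustar = fun x => if 1 / 2 < conv d (gauss d h) χ x then (1 : ℝ) else 0)
    (u : EuclideanSpace ℝ (Fin d) → ℝ)
    (hu_meas : Measurable u) (hu_range : ∀ x, u x ∈ Set.Icc (0 : ℝ) 1)
    (hu_int : Integrable u) :
    (∫ x, (conv d (gauss d (h / 2)) (fun y => ustar y - χ y) x) ^ 2)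
      + (∫ x, ustar x) - (∫ x, ustar x * conv d (gauss d h) ustar x)
    ≤ (∫ x, (conv d (gauss d (h / 2)) (fun y => u y - χ y) x) ^ 2)
      + (∫ x, u x) - ∫ x, u x * conv d (gauss d h) u x :=
  stmt_7_general d h hh χ hχ_int ustar hustar u hu_range hu_int
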